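/- arXiv:2604.21601 — 9 statements merged into one kernel-verified Lean document; each statement's English description precedes it below -/
import Mathlib

section
/- Let G₀ be a nontrivial finite group and let A₁, …, A_r be nontrivial finite groups, at most one of which has order 2 (equivalently, all but at most one of the Aᵢ have at least 3 elements). Let T be a subgroup of the direct product G₀ × A₁ × ⋯ × A_r such that the projection of T onto G₀ is surjective and the projection of T onto A₁ × ⋯ × A_r is surjective. Then T contains an element whose G₀-component is not the identity and whose Aᵢ-component is not the identity for every i = 1, …, r. -/
lemma aux_exists {K : Type*} [Group K] [Finite K] [Nontrivial K]
    (hK : Nat.card K ≠ 2) (b : K) : ∃ a : K, a ≠ 1 ∧ a * b ≠ 1 := by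
  have h2 : 1 < Nat.card K := Finite.one_lt_card
  have h3 : 2 < Nat.card K := by omega
  by_contra h
  push_neg at h
  have hsub : (Set.univ : Set K) ⊆ {1, b⁻¹} := by
    intro a _
    by_cases ha : a = 1
    · exact Or.inl ha
    · exact Or.inr (mul_eq_one_iff_eq_inv.mp (h a ha))
  have hle : Nat.card K ≤ 2 := by
    calc Nat.card K = (Set.univ : Set K).ncard := (Set.ncard_univ K).symm
      _ ≤ ({1, b⁻¹} : Set K).ncard := Set.ncard_le_ncard hsub (Set.toFinite _)
      _ ≤ 2 := le_trans (Set.ncard_insert_le _ _) (by simp)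
  omega

/-- Let `G₀` be a nontrivial finite group and `A 1, …, A r` nontrivial
finite groups, at most one of which has order 2. If `T` is a subgroup of
`G₀ × (A 1 × ⋯ × A r)` projecting surjectively onto `G₀` and onto `A 1 × ⋯ × A r`,
then `T` contains an element all of whose components are nontrivial. -/
theorem stmt0 {r : ℕ} (G₀ : Type*) [Group G₀] [Finite G₀] [Nontrivial G₀]
    (A : Fin r → Type*) [∀ i, Group (A i)] [∀ i, Finite (A i)]
    (hA : ∀ i, Nontrivial (A i))
    (h2 : ∀ i j, Nat.card (A i) = 2 → Nat.card (A j) = 2 → i = j)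
    (T : Subgroup (G₀ × (∀ i, A i)))
    (hT1 : Function.Surjective fun t : T => (t : G₀ × (∀ i, A i)).1)
    (hT2 : Function.Surjective fun t : T => (t : G₀ × (∀ i, A i)).2) :
    ∃ t ∈ T, t.1 ≠ 1 ∧ ∀ i, t.2 i ≠ 1 := by
  -- Key lemma: if s has nontrivial G₀-part and trivial component at every order-2 index,
  -- we can finish.
  have key : ∀ s : G₀ × (∀ i, A i), s ∈ T → s.1 ≠ 1 →
      (∀ i, Nat.card (A i) = 2 → s.2 i = 1) →
      ∃ t ∈ T, t.1 ≠ 1 ∧ ∀ i, t.2 i ≠ 1 := by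
    intro s hs hs1 hs2
    have ha : ∀ i, ∃ a : A i, a ≠ 1 ∧ a * s.2 i ≠ 1 := by
      intro i
      by_cases hc : Nat.card (A i) = 2
      · obtain ⟨a, ha⟩ := exists_ne (1 : A i)
        exact ⟨a, ha, by rw [hs2 i hc, mul_one]; exact ha⟩
      · exact aux_exists hc (s.2 i)
    choose a ha1 ha2 using ha
    obtain ⟨⟨t, ht⟩, h⟩ := hT2 a
    simp only at h
    by_cases ht1 : t.1 = 1
    · refine ⟨t * s, mul_mem ht hs, ?_, ?_⟩
      · show t.1 * s.1 ≠ 1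
        rw [ht1, one_mul]; exact hs1
      · intro i
        show t.2 i * s.2 i ≠ 1
        rw [show t.2 = a from h]
        exact ha2 i
    · exact ⟨t, ht, ht1, fun i => by rw [show t.2 = a from h]; exact ha1 i⟩
  obtain ⟨g₀, hg₀⟩ := exists_ne (1 : G₀)
  obtain ⟨⟨s, hsT⟩, hs⟩ := hT1 g₀
  simp only at hs
  have hs1 : s.1 ≠ 1 := by rw [hs]; exact hg₀
  by_cases hall : ∀ i, Nat.card (A i) = 2 → s.2 i = 1
  · exact key s hsT hs1 hall
  push_neg at hall
  obtain ⟨i₀, hc₀, hb₀⟩ := hall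
  -- build a with a i₀ * s.2 i₀ = 1 and a i * s.2 i ≠ 1 elsewhere, all a i ≠ 1
  have ha : ∀ i, ∃ a : A i, a ≠ 1 ∧ (i = i₀ → a * s.2 i = 1) ∧ (i ≠ i₀ → a * s.2 i ≠ 1) := by
    intro i
    by_cases hi : i = i₀
    · subst hi
      refine ⟨s.2 i, hb₀, fun _ => ?_, fun hne => absurd rfl hne⟩
      have : (s.2 i) ^ Nat.card (A i) = 1 := pow_card_eq_one'
      rw [hc₀] at this
      rw [← sq]; exact this
    · have hc : Nat.card (A i) ≠ 2 := fun hc => hi (h2 i i₀ hc hc₀)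
      obtain ⟨a, ha1, ha2⟩ := aux_exists hc (s.2 i)
      exact ⟨a, ha1, fun he => absurd he hi, fun _ => ha2⟩
  choose a ha1 ha2 ha3 using ha
  obtain ⟨⟨t, ht⟩, h⟩ := hT2 a
  simp only at h
  by_cases ht1 : t.1 = 1
  · -- use key with t * s
    refine key (t * s) (mul_mem ht hsT) ?_ ?_
    · show t.1 * s.1 ≠ 1
      rw [ht1, one_mul]; exact hs1
    · intro i hci
      have : i = i₀ := h2 i i₀ hci hc₀
      show t.2 i * s.2 i = 1
      rw [show t.2 = a from h]
      exact ha2 i this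
  · exact ⟨t, ht, ht1, fun i => by rw [show t.2 = a from h]; exact ha1 i⟩
end

section
/- Let A₁, …, A_r be nontrivial finite groups, at most one of which has order 2. Call an element of the direct product A₁ × ⋯ × A_r totally nontrivial if every one of its r components differs from the identity. Then every subgroup of A₁ × ⋯ × A_r that contains all totally nontrivial elements is equal to the whole group A₁ × ⋯ × A_r. -/
/-!
In a nontrivial group of order other than `2`, every `g` is a product of two non-identity
elements, `g = a * (a⁻¹ * g)` for any `a ∉ {1, g}`; in any nontrivial group so is `1`.
Hence every `x` that is trivial in the factor of order `2` is a product of two totally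
nontrivial elements. Otherwise write `x = y * (y⁻¹ * x)` with `y` totally nontrivial:
that factor has only one non-identity element, so `y⁻¹ * x` is trivial there.
-/

theorem exists_ne_ne_of_card_ne_two {α : Type*} [Nontrivial α] (h : Nat.card α ≠ 2)
    (x y : α) : ∃ z, z ≠ x ∧ z ≠ y := by
  by_contra! hxy
  obtain ⟨z, hzx⟩ := exists_ne x
  refine h (Nat.card_eq_two_iff.mpr ⟨x, y, fun hx => hzx (hx ▸ hxy z hzx), ?_⟩)
  exact Set.eq_univ_of_forall fun w => (eq_or_ne w x).imp id (hxy w)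

section Group

variable {G : Type*} [Group G]

theorem exists_ne_one_mul_eq_of_card_ne_two [Nontrivial G] (h : Nat.card G ≠ 2) (g : G) :
    ∃ a b : G, a ≠ 1 ∧ b ≠ 1 ∧ a * b = g := by
  obtain ⟨a, ha1, hag⟩ := exists_ne_ne_of_card_ne_two h 1 g
  exact ⟨a, a⁻¹ * g, ha1, fun h => hag (inv_mul_eq_one.mp h), mul_inv_cancel_left a g⟩

theorem exists_ne_one_mul_eq_one [Nontrivial G] : ∃ a b : G, a ≠ 1 ∧ b ≠ 1 ∧ a * b = 1 :=
  let ⟨a, ha⟩ := exists_ne (1 : G)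
  ⟨a, a⁻¹, ha, inv_ne_one.mpr ha, mul_inv_cancel a⟩

theorem eq_of_ne_one_of_card_eq_two (h : Nat.card G = 2) {a b : G} (ha : a ≠ 1)
    (hb : b ≠ 1) : a = b :=
  ((Nat.card_eq_two_iff' 1).mp h).unique ha hb

end Group

theorem Pi.mem_of_forall_exists_ne_one_mul_eq {ι : Type*} {A : ι → Type*}
    [∀ i, Group (A i)] {H : Subgroup (∀ i, A i)} (hH : ∀ x : ∀ i, A i, (∀ i, x i ≠ 1) → x ∈ H)
    {x : ∀ i, A i} (hx : ∀ i, ∃ a b : A i, a ≠ 1 ∧ b ≠ 1 ∧ a * b = x i) : x ∈ H := by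
  choose a b ha hb hab using hx
  have hx : x = a * b := funext fun i => (hab i).symm
  exact hx ▸ mul_mem (hH a ha) (hH b hb)

theorem stmt1_general {r : ℕ} (A : Fin r → Type*) [∀ i, Group (A i)]
    (hA : ∀ i, Nontrivial (A i))
    (h2 : ∀ i j, Nat.card (A i) = 2 → Nat.card (A j) = 2 → i = j)
    (H : Subgroup (∀ i, A i))
    (hH : ∀ x : ∀ i, A i, (∀ i, x i ≠ 1) → x ∈ H) :
    H = ⊤ := by
  have mem_of_trivial_on_card_two (z : ∀ i, A i) (hz : ∀ i, Nat.card (A i) = 2 → z i = 1) :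
      z ∈ H := by
    refine Pi.mem_of_forall_exists_ne_one_mul_eq hH fun i => ?_
    by_cases hi : Nat.card (A i) = 2
    · rw [hz i hi]
      exact exists_ne_one_mul_eq_one
    · exact exists_ne_one_mul_eq_of_card_ne_two hi (z i)
  refine eq_top_iff.mpr fun x _ => ?_
  by_cases hx : ∃ i₀, Nat.card (A i₀) = 2 ∧ x i₀ ≠ 1
  · obtain ⟨i₀, hi₀, hxi₀⟩ := hx
    choose y hy using fun i => exists_ne (1 : A i)
    refine mul_inv_cancel_left y x ▸ mul_mem (hH y hy) (mem_of_trivial_on_card_two _ ?_)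
    rintro i hi
    obtain rfl := h2 i i₀ hi hi₀
    exact inv_mul_eq_one.mpr (eq_of_ne_one_of_card_eq_two hi (hy i) hxi₀)
  · push Not at hx
    exact mem_of_trivial_on_card_two x hx

/-- Let `A 1, …, A r` be nontrivial finite groups, at most one of which
has order 2.  Every subgroup of the direct product `A 1 × ⋯ × A r` containing all
"totally nontrivial" elements (those all of whose components differ from the identity)
is the whole group. -/
theorem stmt1 {r : ℕ} (A : Fin r → Type*) [∀ i, Group (A i)] [∀ i, Finite (A i)]
    (hA : ∀ i, Nontrivial (A i))
    (h2 : ∀ i j, Nat.card (A i) = 2 → Nat.card (A j) = 2 → i = j)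
    (H : Subgroup (∀ i, A i))
    (hH : ∀ x : ∀ i, A i, (∀ i, x i ≠ 1) → x ∈ H) :
    H = ⊤ :=
  stmt1_general A hA h2 H hH
end

section
/- Let M be an even positive integer and let j be a divisor of M. Then there exists a matrix h ∈ SL₂(ℤ/Mℤ) such that: (i) h reduces to the identity matrix in SL₂(ℤ/jℤ); (ii) for every prime p dividing M/j, the reduction of h in SL₂(ℤ/jpℤ) is not the identity matrix; and (iii) the reduction of h modulo 2 is sent to 1 by every group homomorphism from GL₂(ℤ/2ℤ) to {±1}. -/
/-!
Take `h = [[1, j], [-j, 1 - j²]]`, the product `[[1, 0], [-j, 1]] · [[1, j], [0, 1]]` of two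
elementary matrices. It is trivial mod `j`, and its `(0, 1)` entry `j` is nonzero mod `jp`.
Mod 2 it is either the identity or `[[1, 1], [1, 0]]`, which has order 3; since `ℤˣ` has
exponent 2, every character `GL₂(ℤ/2ℤ) → {±1}` kills an element of odd order.
-/

open Matrix

theorem MonoidHom.intUnits_apply_eq_one_of_pow_eq_one {G : Type*} [Monoid G] (χ : G →* ℤˣ)
    {g : G} {n : ℕ} (hg : g ^ n = 1) (hn : Odd n) : χ g = 1 := by
  have hχ : χ g ^ n = 1 := by rw [← map_pow, hg, map_one]
  rwa [Int.units_pow_eq_pow_mod_two, Nat.odd_iff.mp hn, pow_one] at hχ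

namespace Matrix.SpecialLinearGroup

variable {R S : Type*} [CommRing R] [CommRing S]

def lowerMulUpper (a : R) : SpecialLinearGroup (Fin 2) R :=
  ⟨!![1, a; -a, 1 - a ^ 2], by simp [det_fin_two_of]; ring⟩

@[simp]
theorem coe_lowerMulUpper (a : R) :
    (lowerMulUpper a : Matrix (Fin 2) (Fin 2) R) = !![1, a; -a, 1 - a ^ 2] :=
  rfl

theorem map_lowerMulUpper (f : R →+* S) (a : R) :
    map f (lowerMulUpper a) = lowerMulUpper (f a) := by
  ext i k
  fin_cases i <;> fin_cases k <;> simp [map_apply_coe]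

theorem lowerMulUpper_eq_one_iff {a : R} : lowerMulUpper a = 1 ↔ a = 0 := by
  constructor
  · intro h
    simpa using congr_arg (fun g : SpecialLinearGroup (Fin 2) R => g 0 1) h
  · rintro rfl
    ext i k
    fin_cases i <;> fin_cases k <;> simp

theorem lowerMulUpper_pow_three (a : ZMod 2) : lowerMulUpper a ^ 3 = 1 := by
  apply Subtype.ext
  rw [coe_pow]
  revert a
  decide

end Matrix.SpecialLinearGroup

open Matrix.SpecialLinearGroup in
/-- For `M` an even positive integer and `j ∣ M`, there is a matrix
`h ∈ SL₂(ℤ/Mℤ)` that is trivial mod `j`, nontrivial mod `jp` for every prime `p ∣ M/j`,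
and whose reduction mod 2 is killed by every homomorphism `GL₂(ℤ/2ℤ) → {±1}`. -/
theorem stmt2 (M j : ℕ) (hM : 0 < M) (hM2 : 2 ∣ M) (hj : j ∣ M) :
    ∃ h : Matrix.SpecialLinearGroup (Fin 2) (ZMod M),
      Matrix.SpecialLinearGroup.map (ZMod.castHom hj (ZMod j)) h = 1 ∧
      (∀ p : ℕ, p.Prime → ∀ hp : p ∣ M / j,
        Matrix.SpecialLinearGroup.map
          (ZMod.castHom
            (show j * p ∣ M from
              (Nat.mul_div_cancel' hj) ▸ mul_dvd_mul_left j hp)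
            (ZMod (j * p))) h ≠ 1) ∧
      (∀ χ : GL (Fin 2) (ZMod 2) →* ℤˣ,
        χ (Matrix.SpecialLinearGroup.toGL
            (Matrix.SpecialLinearGroup.map (ZMod.castHom hM2 (ZMod 2)) h)) = 1) := by
  have hj0 : j ≠ 0 := by
    rintro rfl
    exact hM.ne' (zero_dvd_iff.mp hj)
  refine ⟨lowerMulUpper (j : ZMod M), ?_, fun p hp _ => ?_, fun χ => ?_⟩
  · rw [map_lowerMulUpper, map_natCast, lowerMulUpper_eq_one_iff, ZMod.natCast_self]
  · rw [map_lowerMulUpper, map_natCast, Ne, lowerMulUpper_eq_one_iff, ZMod.natCast_eq_zero_iff]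
    intro hjp
    exact hp.not_dvd_one ((mul_dvd_mul_iff_left hj0).mp (by rwa [mul_one]))
  · refine χ.intUnits_apply_eq_one_of_pow_eq_one (n := 3) ?_ (by decide)
    rw [← map_pow, map_lowerMulUpper, lowerMulUpper_pow_three, map_one]
end

section
/- Let m and j be positive integers with j ∣ m, and let H be a subgroup of GL₂(ℤ/mℤ). For each divisor d of m, write Γ_d for the kernel of the reduction map GL₂(ℤ/mℤ) → GL₂(ℤ/dℤ). Let S be the set of primes dividing m/j and let r = ∏_{p ∈ S} p. Then ∑_{k ∣ r} μ(k) · |H ∩ Γ_{jk}| = 0 if and only if H ∩ Γ_j = ⋃_{p ∈ S} (H ∩ Γ_{jp}) (equality of subsets of GL₂(ℤ/mℤ)). -/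
open Matrix ArithmeticFunction

/-- The congruence subgroup `Γ_d`: the kernel of the reduction map
`GL₂(ℤ/mℤ) → GL₂(ℤ/dℤ)` for `d ∣ m`. -/
def GammaSub (m d : ℕ) (hd : d ∣ m) : Subgroup (GL (Fin 2) (ZMod m)) :=
  (Matrix.GeneralLinearGroup.map (n := Fin 2) (ZMod.castHom hd (ZMod d))).ker

/-- The "level" of `x`: the gcd of the values of the entries of `x - 1`. -/
def NvalAux (m : ℕ) (x : GL (Fin 2) (ZMod m)) : ℕ :=
  Finset.univ.gcd fun ij : Fin 2 × Fin 2 =>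
    (((x : Matrix (Fin 2) (Fin 2) (ZMod m)) - 1) ij.1 ij.2).val

lemma mem_gammaSub_iff (m d : ℕ) [NeZero m] (hd : d ∣ m) (x : GL (Fin 2) (ZMod m)) :
    x ∈ GammaSub m d hd ↔ d ∣ NvalAux m x := by
  set f := ZMod.castHom hd (ZMod d) with hf
  have hmem : x ∈ GammaSub m d hd ↔
      ((x : Matrix (Fin 2) (Fin 2) (ZMod m)) - 1).map f = 0 := by
    rw [GammaSub, MonoidHom.mem_ker,
      Matrix.map_sub f (fun a b => map_sub f a b), sub_eq_zero,
      Matrix.map_one (f : ZMod m → ZMod d) (map_zero f) (map_one f)]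
    constructor
    · intro h
      have := congrArg Units.val h
      simpa [Matrix.GeneralLinearGroup.map, RingHom.mapMatrix_apply] using this
    · intro h
      apply Units.ext
      simpa [Matrix.GeneralLinearGroup.map, RingHom.mapMatrix_apply] using h
  rw [hmem, NvalAux, Finset.dvd_gcd_iff]
  constructor
  · intro h ij _
    have h1 := congrFun (congrFun h ij.1) ij.2
    simp only [Matrix.map_apply, Matrix.zero_apply] at h1
    rwa [ZMod.castHom_apply, ← ZMod.natCast_val, ZMod.natCast_eq_zero_iff] at h1
  · intro h
    ext i j'
    have h1 := h (i, j') (Finset.mem_univ _)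
    rw [← ZMod.natCast_eq_zero_iff, ZMod.natCast_val] at h1
    simpa [hf, Matrix.map_apply, ZMod.castHom_apply] using h1

/-- With `S` the set of primes dividing `m/j` and `r = ∏_{p ∈ S} p`,
the alternating sum `∑_{k ∣ r} μ(k)·|H ∩ Γ_{jk}|` vanishes if and only if
`H ∩ Γ_j = ⋃_{p ∈ S} (H ∩ Γ_{jp})` as subsets of `GL₂(ℤ/mℤ)`. -/
theorem stmt4 (m j : ℕ) (hm : 0 < m) (hj : j ∣ m)
    (H : Subgroup (GL (Fin 2) (ZMod m)))
    (r : ℕ) (hr : r = ∏ p ∈ (m / j).primeFactors, p) :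
    (∑ k ∈ r.divisors.attach,
        (moebius k.1 : ℤ) *
          (Nat.card ↥(H ⊓ GammaSub m (j * k.1)
            (by
              have h1 : (k.1 : ℕ) ∣ r := Nat.dvd_of_mem_divisors k.2
              have h2 : r ∣ m / j := hr ▸ Nat.prod_primeFactors_dvd (m / j)
              calc j * k.1 ∣ j * (m / j) := mul_dvd_mul_left j (h1.trans h2)
                _ = m := Nat.mul_div_cancel' hj)) : ℤ)) = 0
      ↔ ((H ⊓ GammaSub m j hj : Subgroup (GL (Fin 2) (ZMod m))) :
            Set (GL (Fin 2) (ZMod m)))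
          = ⋃ p, ⋃ hp : p ∈ (m / j).primeFactors,
            ((H ⊓ GammaSub m (j * p)
              (by
                have h1 : p ∣ m / j := Nat.dvd_of_mem_primeFactors hp
                calc j * p ∣ j * (m / j) := mul_dvd_mul_left j h1
                  _ = m := Nat.mul_div_cancel' hj) : Subgroup (GL (Fin 2) (ZMod m))) :
              Set (GL (Fin 2) (ZMod m))) := by
  classical
  haveI : NeZero m := ⟨hm.ne'⟩
  have hj0 : 0 < j := Nat.pos_of_dvd_of_pos hj hm
  set G := GL (Fin 2) (ZMod m) with hG
  set N : G → ℕ := fun x => NvalAux m x with hNdef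
  have hmem : ∀ (d : ℕ) (hd : d ∣ m) (x : G), x ∈ GammaSub m d hd ↔ d ∣ N x :=
    fun d hd x => mem_gammaSub_iff m d hd x
  have hr0 : 0 < r := hr ▸ Finset.prod_pos fun p hp => (Nat.prime_of_mem_primeFactors hp).pos
  have hS : ∀ p : ℕ, p ∈ (m / j).primeFactors ↔ p.Prime ∧ p ∣ r := by
    intro p
    constructor
    · intro hp
      exact ⟨Nat.prime_of_mem_primeFactors hp, hr ▸ Finset.dvd_prod_of_mem _ hp⟩
    · rintro ⟨hp, hpr⟩
      rw [hr] at hpr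
      obtain ⟨q, hq, hpq⟩ := hp.prime.exists_mem_finset_dvd hpr
      rwa [(Nat.prime_dvd_prime_iff_eq hp (Nat.prime_of_mem_primeFactors hq)).mp hpq]
  have hsum : ∀ g : ℕ, (∑ k ∈ g.divisors, (moebius k : ℤ)) = if g = 1 then 1 else 0 := by
    intro g
    rw [← ArithmeticFunction.coe_mul_zeta_apply, moebius_mul_coe_zeta,
      ArithmeticFunction.one_apply]
  have hfilt : ∀ n : ℕ, r.divisors.filter (fun k => k ∣ n) = (Nat.gcd r n).divisors := by
    intro n
    ext k
    simp only [Finset.mem_filter, Nat.mem_divisors]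
    constructor
    · rintro ⟨⟨h1, -⟩, h2⟩
      exact ⟨Nat.dvd_gcd h1 h2, (Nat.gcd_pos_of_pos_left n hr0).ne'⟩
    · rintro ⟨h, -⟩
      exact ⟨⟨h.trans (Nat.gcd_dvd_left _ _), hr0.ne'⟩, h.trans (Nat.gcd_dvd_right _ _)⟩
  -- Step 1: rewrite the sum over the attached divisors as a plain sum of filter-cards
  have hA : (∑ k ∈ r.divisors.attach,
        (moebius k.1 : ℤ) *
          (Nat.card ↥(H ⊓ GammaSub m (j * k.1)
            (by
              have h1 : (k.1 : ℕ) ∣ r := Nat.dvd_of_mem_divisors k.2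
              have h2 : r ∣ m / j := hr ▸ Nat.prod_primeFactors_dvd (m / j)
              calc j * k.1 ∣ j * (m / j) := mul_dvd_mul_left j (h1.trans h2)
                _ = m := Nat.mul_div_cancel' hj)) : ℤ))
      = ∑ k ∈ r.divisors, (moebius k : ℤ) *
          ((Finset.univ.filter (fun x : G => x ∈ H ∧ (j * k) ∣ N x)).card : ℤ) := by
    rw [← Finset.sum_attach r.divisors (fun k => (moebius k : ℤ) *
      ((Finset.univ.filter (fun x : G => x ∈ H ∧ (j * k) ∣ N x)).card : ℤ))]
    refine Finset.sum_congr rfl fun k _ => ?_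
    congr 1
    have h1 : (k.1 : ℕ) ∣ r := Nat.dvd_of_mem_divisors k.2
    have h2 : r ∣ m / j := hr ▸ Nat.prod_primeFactors_dvd (m / j)
    have hdvd : j * k.1 ∣ m := by
      calc j * k.1 ∣ j * (m / j) := mul_dvd_mul_left j (h1.trans h2)
        _ = m := Nat.mul_div_cancel' hj
    rw [Nat.card_eq_fintype_card, Fintype.card_subtype]
    norm_cast
    congr 1
    ext x
    simp [Subgroup.mem_inf, hmem _ hdvd x]
  -- Step 2: exchange sums and evaluate the inner Möbius sum
  have inner : ∀ x : G,
      (∑ k ∈ r.divisors, (moebius k : ℤ) * (if x ∈ H ∧ (j * k) ∣ N x then (1 : ℤ) else 0))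
        = if x ∈ H ∧ j ∣ N x ∧ Nat.gcd r (N x / j) = 1 then (1 : ℤ) else 0 := by
    intro x
    by_cases hH : x ∈ H
    · by_cases hjN : j ∣ N x
      · have heq : ∀ k ∈ r.divisors,
            (moebius k : ℤ) * (if x ∈ H ∧ (j * k) ∣ N x then (1 : ℤ) else 0)
              = if k ∣ N x / j then (moebius k : ℤ) else 0 := by
          intro k _
          by_cases hk : k ∣ N x / j
          · rw [if_pos hk, if_pos ⟨hH, (Nat.dvd_div_iff_mul_dvd hjN).mp hk⟩, mul_one]
          · rw [if_neg hk, if_neg, mul_zero]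
            rintro ⟨-, hd⟩
            exact hk ((Nat.dvd_div_iff_mul_dvd hjN).mpr hd)
        rw [Finset.sum_congr rfl heq, ← Finset.sum_filter, hfilt, hsum]
        simp [hH, hjN]
      · have heq : ∀ k ∈ r.divisors,
            (moebius k : ℤ) * (if x ∈ H ∧ (j * k) ∣ N x then (1 : ℤ) else 0) = 0 := by
          intro k _
          rw [if_neg, mul_zero]
          rintro ⟨-, hd⟩
          exact hjN ((dvd_mul_right j k).trans hd)
        rw [Finset.sum_congr rfl heq, Finset.sum_const_zero, if_neg]
        rintro ⟨-, hd, -⟩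
        exact hjN hd
    · have heq : ∀ k ∈ r.divisors,
          (moebius k : ℤ) * (if x ∈ H ∧ (j * k) ∣ N x then (1 : ℤ) else 0) = 0 := by
        intro k _
        rw [if_neg, mul_zero]
        rintro ⟨hx, -⟩
        exact hH hx
      rw [Finset.sum_congr rfl heq, Finset.sum_const_zero, if_neg]
      rintro ⟨hx, -⟩
      exact hH hx
  have hB : (∑ k ∈ r.divisors, (moebius k : ℤ) *
        ((Finset.univ.filter (fun x : G => x ∈ H ∧ (j * k) ∣ N x)).card : ℤ))
      = ((Finset.univ.filter
          (fun x : G => x ∈ H ∧ j ∣ N x ∧ Nat.gcd r (N x / j) = 1)).card : ℤ) := by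
    calc (∑ k ∈ r.divisors, (moebius k : ℤ) *
            ((Finset.univ.filter (fun x : G => x ∈ H ∧ (j * k) ∣ N x)).card : ℤ))
        = ∑ k ∈ r.divisors, ∑ x : G,
            (moebius k : ℤ) * (if x ∈ H ∧ (j * k) ∣ N x then (1 : ℤ) else 0) := by
          refine Finset.sum_congr rfl fun k _ => ?_
          rw [← Finset.mul_sum, Finset.sum_boole]
      _ = ∑ x : G, ∑ k ∈ r.divisors,
            (moebius k : ℤ) * (if x ∈ H ∧ (j * k) ∣ N x then (1 : ℤ) else 0) :=
          Finset.sum_comm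
      _ = ∑ x : G, (if x ∈ H ∧ j ∣ N x ∧ Nat.gcd r (N x / j) = 1 then (1 : ℤ) else 0) :=
          Finset.sum_congr rfl fun x _ => inner x
      _ = _ := Finset.sum_boole _ _
  -- Step 3: reformulate the right-hand side
  have hRHS : (((H ⊓ GammaSub m j hj : Subgroup G) : Set G)
          = ⋃ p, ⋃ hp : p ∈ (m / j).primeFactors,
            ((H ⊓ GammaSub m (j * p)
              (by
                have h1 : p ∣ m / j := Nat.dvd_of_mem_primeFactors hp
                calc j * p ∣ j * (m / j) := mul_dvd_mul_left j h1
                  _ = m := Nat.mul_div_cancel' hj) : Subgroup G) : Set G))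
      ↔ ∀ x : G, x ∈ H → j ∣ N x → ∃ p ∈ (m / j).primeFactors, (j * p) ∣ N x := by
    constructor
    · intro h x hxH hxj
      have hx : x ∈ ((H ⊓ GammaSub m j hj : Subgroup G) : Set G) := by
        exact Subgroup.mem_inf.mpr ⟨hxH, (hmem j hj x).mpr hxj⟩
      rw [h] at hx
      simp only [Set.mem_iUnion, SetLike.mem_coe] at hx
      obtain ⟨p, hp, hx⟩ := hx
      exact ⟨p, hp, (hmem _ _ x).mp (Subgroup.mem_inf.mp hx).2⟩
    · intro h
      apply Set.Subset.antisymm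
      · intro x hx
        have hx' := Subgroup.mem_inf.mp hx
        obtain ⟨p, hp, hdvd⟩ := h x hx'.1 ((hmem j hj x).mp hx'.2)
        simp only [Set.mem_iUnion, SetLike.mem_coe]
        exact ⟨p, hp, Subgroup.mem_inf.mpr ⟨hx'.1, (hmem _ _ x).mpr hdvd⟩⟩
      · intro x hx
        simp only [Set.mem_iUnion, SetLike.mem_coe] at hx
        obtain ⟨p, hp, hx⟩ := hx
        have hx' := Subgroup.mem_inf.mp hx
        exact Subgroup.mem_inf.mpr ⟨hx'.1,
          (hmem j hj x).mpr ((dvd_mul_right j p).trans ((hmem _ _ x).mp hx'.2))⟩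
  rw [hA, hB, hRHS]
  rw [Int.natCast_eq_zero, Finset.card_eq_zero, Finset.filter_eq_empty_iff]
  constructor
  · intro h0 x hxH hxj
    have h1 := h0 (Finset.mem_univ x)
    have hg : Nat.gcd r (N x / j) ≠ 1 := fun hc => h1 ⟨hxH, hxj, hc⟩
    obtain ⟨p, hp, hpr, hpn⟩ := Nat.Prime.not_coprime_iff_dvd.mp hg
    exact ⟨p, (hS p).mpr ⟨hp, hpr⟩, (Nat.dvd_div_iff_mul_dvd hxj).mp hpn⟩
  · intro h x _
    rintro ⟨hxH, hxj, hg⟩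
    obtain ⟨p, hpS, hpd⟩ := h x hxH hxj
    have hp := (hS p).mp hpS
    exact Nat.Prime.not_coprime_iff_dvd.mpr
      ⟨p, hp.1, hp.2, (Nat.dvd_div_iff_mul_dvd hxj).mpr hpd⟩ hg
end

section
/- Let M, m, k be positive integers and p a prime such that m ∣ M, pk ∣ M, and the p-adic valuation of k is at least the p-adic valuation of m. Let H be a subgroup of GL₂(ℤ/Mℤ) containing the kernel of the reduction map GL₂(ℤ/Mℤ) → GL₂(ℤ/mℤ). Then the order of the image of H under reduction modulo pk equals the order of the image of H under reduction modulo k, multiplied by p⁴ if p divides k, and multiplied by (p² − 1)(p² − p) if p does not divide k. -/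
open Matrix

/-!
Reduction modulo `k` maps the image of `H` modulo `pk` onto its image modulo `k`, so the two
orders differ by the order of the kernel `K` of `GL₂(ℤ/pk) → GL₂(ℤ/k)` as soon as `K` lies in the
image of `H`. It does: by the Chinese remainder theorem an element `x ∈ K` lifts to some
`y ∈ GL₂(ℤ/M)` that is trivial modulo the prime-to-`p` part of `M`; as `v_p(m) ≤ v_p(k)` and
`x ≡ 1 mod k`, such a `y` is trivial modulo `m`, hence lies in `H`.

If `p ∤ k`, then `K ≅ GL₂(𝔽_p)`, again by the Chinese remainder theorem. If `p ∣ k`, then every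
matrix congruent to `1` modulo `k` is invertible modulo `pk`, so `K` is a coset of the kernel of
`M₂(ℤ/pk) → M₂(ℤ/k)`, of order `p⁴`.
-/

theorem ZMod.isUnit_of_isUnit_castHom {d n : ℕ} [NeZero n] (h : d ∣ n)
    (hprime : n.primeFactors ⊆ d.primeFactors) {z : ZMod n}
    (hz : IsUnit (castHom h (ZMod d) z)) : IsUnit z := by
  rw [← natCast_zmod_val z, map_natCast, isUnit_iff_coprime] at hz
  rw [← natCast_zmod_val z, isUnit_iff_coprime]
  refine Nat.coprime_of_dvd fun q hq hqz hqn => hq.one_lt.ne' (Nat.eq_one_of_dvd_coprimes hz hqz ?_)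
  exact Nat.dvd_of_mem_primeFactors (hprime (Nat.mem_primeFactors.mpr ⟨hq, hqn, NeZero.ne n⟩))

theorem Nat.primeFactors_prime_pow_subset {p a b : ℕ} (hp : p.Prime) (hb : b ≠ 0) :
    (p ^ a).primeFactors ⊆ (p ^ b).primeFactors := by
  rw [Nat.primeFactors_prime_pow hb hp]
  intro q hq
  rw [Nat.mem_primeFactors] at hq
  exact Finset.mem_singleton.mpr
    ((Nat.prime_dvd_prime_iff_eq hq.1 hp).mp (hq.1.dvd_of_dvd_pow hq.2.1))

theorem Subgroup.card_eq_card_ker_mul_card_map {G G' : Type*} [Group G] [Group G']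
    {K : Subgroup G} (f : G →* G') (h : f.ker ≤ K) :
    Nat.card K = Nat.card f.ker * Nat.card (K.map f) := by
  rw [← relIndex_bot_left K, ← relIndex_bot_left f.ker, ← relIndex_ker,
    relIndex_mul_relIndex _ _ _ bot_le h]

namespace Matrix.GeneralLinearGroup

variable {ι : Type*} [Fintype ι] [DecidableEq ι]

theorem map_castHom_map_castHom {n d e : ℕ} (hd : d ∣ n) (he : e ∣ d) (x : GL ι (ZMod n)) :
    map (ZMod.castHom he (ZMod e)) (map (ZMod.castHom hd (ZMod d)) x) =
      map (ZMod.castHom (he.trans hd) (ZMod e)) x := by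
  rw [← MonoidHom.comp_apply, ← map_comp, ZMod.castHom_comp]

theorem map_castHom_surjective {d n : ℕ} [NeZero n] (h : d ∣ n)
    (hprime : n.primeFactors ⊆ d.primeFactors) :
    Function.Surjective (map (ZMod.castHom h (ZMod d)) : GL ι (ZMod n) →* GL ι (ZMod d)) := by
  intro x
  set f := ZMod.castHom h (ZMod d)
  set A : Matrix ι ι (ZMod n) :=
    (x : Matrix ι ι (ZMod d)).map (Function.surjInv (ZMod.ringHom_surjective f))
  have hA : f.mapMatrix A = x := by
    ext i j
    exact Function.surjInv_eq _ _
  have hdet : IsUnit A.det := ZMod.isUnit_of_isUnit_castHom h hprime <| by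
    rw [RingHom.map_det, hA]
    exact isUnits_det_units x
  exact ⟨mk'' A hdet, Units.ext hA⟩

theorem map_castHom_prod_bijective {a b n : ℕ} (hab : a.Coprime b) (ha : a ∣ n) (hb : b ∣ n)
    (hn : n ∣ a * b) :
    Function.Bijective ((map (ZMod.castHom ha (ZMod a))).prod (map (ZMod.castHom hb (ZMod b))) :
      GL ι (ZMod n) →* GL ι (ZMod a) × GL ι (ZMod b)) := by
  obtain rfl : n = a * b := Nat.dvd_antisymm hn (hab.mul_dvd_of_dvd_of_dvd ha hb)
  set e := ZMod.chineseRemainder hab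
  have he₁ : ∀ z, (e z).1 = ZMod.castHom ha (ZMod a) z := DFunLike.congr_fun
    (Subsingleton.elim ((RingHom.fst _ _).comp e.toRingHom) _)
  have he₂ : ∀ z, (e z).2 = ZMod.castHom hb (ZMod b) z := DFunLike.congr_fun
    (Subsingleton.elim ((RingHom.snd _ _).comp e.toRingHom) _)
  refine ⟨fun x y hxy => ext fun i j => e.injective (Prod.ext ?_ ?_), fun xy => ?_⟩
  · simpa [he₁] using congr_arg (fun g => (g.1 : Matrix ι ι (ZMod a)) i j) hxy
  · simpa [he₂] using congr_arg (fun g => (g.2 : Matrix ι ι (ZMod b)) i j) hxy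
  set Z : Matrix ι ι (ZMod (a * b)) := Matrix.of fun i j => e.symm (xy.1 i j, xy.2 i j)
  have hZa : (ZMod.castHom ha (ZMod a)).mapMatrix Z = xy.1 := by
    ext i j
    simp [Z, ← he₁]
  have hZb : (ZMod.castHom hb (ZMod b)).mapMatrix Z = xy.2 := by
    ext i j
    simp [Z, ← he₂]
  have hdet : IsUnit Z.det := by
    rw [← MulEquiv.isUnit_map e.toMulEquiv, Prod.isUnit_iff, RingEquiv.toMulEquiv_eq_coe,
      RingEquiv.coe_toMulEquiv, he₁, he₂, RingHom.map_det, RingHom.map_det, hZa, hZb]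
    exact ⟨isUnits_det_units xy.1, isUnits_det_units xy.2⟩
  exact ⟨mk'' Z hdet, Prod.ext (Units.ext hZa) (Units.ext hZb)⟩

theorem card_ker_map_castHom_of_coprime {a b : ℕ} (hab : a.Coprime b) :
    Nat.card (map (ZMod.castHom (dvd_mul_left b a) (ZMod b)) :
      GL ι (ZMod (a * b)) →* GL ι (ZMod b)).ker = Nat.card (GL ι (ZMod a)) := by
  have hcrt := map_castHom_prod_bijective (ι := ι) hab (dvd_mul_right a b) (dvd_mul_left b a)
    dvd_rfl
  refine Nat.card_congr (Equiv.ofBijective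
    (fun z => map (ZMod.castHom (dvd_mul_right a b) (ZMod a)) z) ⟨?_, fun x => ?_⟩)
  · intro z w hzw
    exact Subtype.ext (hcrt.1 (Prod.ext hzw (z.2.trans w.2.symm)))
  · obtain ⟨z, hz⟩ := hcrt.2 (x, 1)
    exact ⟨⟨z, congr_arg Prod.snd hz⟩, congr_arg Prod.fst hz⟩

theorem card_ker_map_castHom_mul_pow {d n : ℕ} [NeZero n] (h : d ∣ n)
    (hprime : n.primeFactors ⊆ d.primeFactors) :
    Nat.card (map (ZMod.castHom h (ZMod d)) : GL ι (ZMod n) →* GL ι (ZMod d)).ker *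
      d ^ (Fintype.card ι ^ 2) = n ^ (Fintype.card ι ^ 2) := by
  set f := ZMod.castHom h (ZMod d)
  set φ := (f.mapMatrix : Matrix ι ι (ZMod n) →+* Matrix ι ι (ZMod d)).toAddMonoidHom
  have hφ : Function.Surjective φ := fun B =>
    ⟨Matrix.map B (Function.surjInv (ZMod.ringHom_surjective f)),
      by ext i j; exact Function.surjInv_eq _ _⟩
  have hker : (map f : GL ι (ZMod n) →* GL ι (ZMod d)).ker ≃ φ.ker :=
    { toFun := fun z => ⟨((z : GL ι (ZMod n)) : Matrix ι ι (ZMod n)) - 1, by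
        have hz : f.mapMatrix ((z : GL ι (ZMod n)) : Matrix ι ι (ZMod n)) = 1 :=
          congr_arg Units.val z.2
        simp [φ, map_sub, hz]⟩
      invFun := fun A => by
        have hA : f.mapMatrix (1 + (A : Matrix ι ι (ZMod n))) = 1 := by
          rw [map_add, map_one, show f.mapMatrix (A : Matrix ι ι (ZMod n)) = 0 from A.2, add_zero]
        refine ⟨mk'' (1 + A) (ZMod.isUnit_of_isUnit_castHom h hprime ?_), Units.ext hA⟩
        rw [RingHom.map_det, hA, det_one]
        exact isUnit_one
      left_inv := fun z => by ext; simp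
      right_inv := fun A => by ext; simp }
  have hcard : Nat.card (Matrix ι ι (ZMod n)) =
      Nat.card φ.ker * Nat.card (Matrix ι ι (ZMod d)) := by
    rw [← φ.ker.card_mul_index, AddSubgroup.index_ker, AddMonoidHom.range_eq_top.mpr hφ,
      AddSubgroup.card_top]
  have hcardMat (r : ℕ) : Nat.card (Matrix ι ι (ZMod r)) = r ^ (Fintype.card ι ^ 2) := by
    simp [Matrix, Nat.card_fun, sq, pow_mul]
  rw [← hcardMat, ← hcardMat, hcard, Nat.card_congr hker]

theorem exists_map_castHom_eq_and_map_castHom_eq_one {M m k p : ℕ} [NeZero M] (hp : p.Prime)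
    (hmM : m ∣ M) (hpkM : p * k ∣ M) (hval : padicValNat p m ≤ padicValNat p k)
    (x : GL ι (ZMod (p * k))) (hx : map (ZMod.castHom (dvd_mul_left k p) (ZMod k)) x = 1) :
    ∃ y : GL ι (ZMod M), map (ZMod.castHom hpkM (ZMod (p * k))) y = x ∧
      map (ZMod.castHom hmM (ZMod m)) y = 1 := by
  have hM : M ≠ 0 := NeZero.ne M
  have hpk : p * k ≠ 0 := ne_zero_of_dvd_ne_zero hM hpkM
  have hm : m ≠ 0 := ne_zero_of_dvd_ne_zero hM hmM
  have hcrt {n : ℕ} (hn : n ≠ 0) := map_castHom_prod_bijective (ι := ι)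
    ((Nat.coprime_ordCompl hp hn).pow_left _) (Nat.ordProj_dvd n p) (Nat.ordCompl_dvd n p)
    (Nat.ordProj_mul_ordCompl_eq_self n p).symm.dvd
  have hpk_p : ordProj[p] (p * k) ∣ ordProj[p] M := Nat.ordProj_dvd_ordProj_of_dvd hM hpkM p
  have hpk_p' : ordCompl[p] (p * k) ∣ ordCompl[p] M := Nat.ordCompl_dvd_ordCompl_of_dvd hpkM p
  have hpk_k : ordCompl[p] (p * k) ∣ k :=
    (Nat.coprime_ordCompl hp hpk).symm.dvd_of_dvd_mul_left (Nat.ordCompl_dvd (p * k) p)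
  have hm_k : ordProj[p] m ∣ ordProj[p] k :=
    pow_dvd_pow p (by rwa [Nat.factorization_def m hp, Nat.factorization_def k hp])
  have hm_p : ordProj[p] m ∣ ordProj[p] (p * k) :=
    hm_k.trans (Nat.ordProj_dvd_ordProj_of_dvd hpk (dvd_mul_left k p) p)
  have hm_p' : ordCompl[p] m ∣ ordCompl[p] M := Nat.ordCompl_dvd_ordCompl_of_dvd hmM p
  have : NeZero (ordProj[p] M) := ⟨pow_ne_zero _ hp.ne_zero⟩
  obtain ⟨xp, hxp⟩ := map_castHom_surjective hpk_p (Nat.primeFactors_prime_pow_subset hp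
    (hp.factorization_pos_of_dvd hpk (dvd_mul_right p k)).ne')
    (map (ZMod.castHom (Nat.ordProj_dvd (p * k) p) (ZMod _)) x)
  -- `y` is `xp` at `p` and trivial away from `p`
  obtain ⟨y, hy⟩ := (hcrt hM).2 (xp, 1)
  simp only [MonoidHom.prod_apply, Prod.mk.injEq] at hy
  refine ⟨y, (hcrt hpk).1 (Prod.ext ?_ ?_), (hcrt hm).1 (Prod.ext ?_ ?_)⟩ <;>
    simp only [MonoidHom.prod_apply, map_castHom_map_castHom, map_one, Prod.fst_one, Prod.snd_one]
  · rw [← hxp, ← hy.1, map_castHom_map_castHom]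
  · rw [← map_castHom_map_castHom (dvd_mul_left k p) hpk_k, hx, map_one,
      ← map_castHom_map_castHom (Nat.ordCompl_dvd M p) hpk_p', hy.2, map_one]
  · rw [← map_castHom_map_castHom (Nat.ordProj_dvd M p) (hm_p.trans hpk_p), hy.1,
      ← map_castHom_map_castHom hpk_p hm_p, hxp, map_castHom_map_castHom,
      ← map_castHom_map_castHom (dvd_mul_left k p) (hm_k.trans (Nat.ordProj_dvd k p)), hx, map_one]
  · rw [← map_castHom_map_castHom (Nat.ordCompl_dvd M p) hm_p', hy.2, map_one]

end Matrix.GeneralLinearGroup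

theorem stmt5_general (M m k p : ℕ) (hM : 0 < M)
    (hp : p.Prime) (hmM : m ∣ M) (hpkM : p * k ∣ M)
    (hval : padicValNat p m ≤ padicValNat p k)
    (H : Subgroup (GL (Fin 2) (ZMod M)))
    (hH : (Matrix.GeneralLinearGroup.map (n := Fin 2)
            (ZMod.castHom hmM (ZMod m))).ker ≤ H) :
    Nat.card (Subgroup.map (Matrix.GeneralLinearGroup.map (n := Fin 2)
        (ZMod.castHom hpkM (ZMod (p * k)))) H)
      = Nat.card (Subgroup.map (Matrix.GeneralLinearGroup.map (n := Fin 2)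
          (ZMod.castHom ((dvd_mul_left k p).trans hpkM) (ZMod k))) H) *
        (if p ∣ k then p ^ 4 else (p ^ 2 - 1) * (p ^ 2 - p)) := by
  have : NeZero M := ⟨hM.ne'⟩
  have hpk : p * k ≠ 0 := ne_zero_of_dvd_ne_zero hM.ne' hpkM
  have hk : k ≠ 0 := right_ne_zero_of_mul hpk
  have : NeZero (p * k) := ⟨hpk⟩
  set red := GeneralLinearGroup.map (n := Fin 2) (ZMod.castHom (dvd_mul_left k p) (ZMod k))
  have hker : red.ker ≤ H.map (GeneralLinearGroup.map (ZMod.castHom hpkM (ZMod (p * k)))) :=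
    fun x hx => by
      obtain ⟨y, hyx, hy1⟩ :=
        GeneralLinearGroup.exists_map_castHom_eq_and_map_castHom_eq_one hp hmM hpkM hval x hx
      exact ⟨y, hH hy1, hyx⟩
  rw [← ZMod.castHom_comp (dvd_mul_left k p) hpkM, GeneralLinearGroup.map_comp,
    ← Subgroup.map_map, Subgroup.card_eq_card_ker_mul_card_map red hker, mul_comm]
  congr 1
  split_ifs with hpk_dvd
  · have hprime : (p * k).primeFactors ⊆ k.primeFactors := by
      rw [Nat.primeFactors_mul hp.ne_zero hk, hp.primeFactors]
      exact Finset.union_subset (by simp [hp, hpk_dvd, hk]) subset_rfl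
    have hcard := GeneralLinearGroup.card_ker_map_castHom_mul_pow (ι := Fin 2)
      (dvd_mul_left k p) hprime
    rw [Fintype.card_fin, mul_pow] at hcard
    exact Nat.eq_of_mul_eq_mul_right (pow_pos (Nat.pos_of_ne_zero hk) _) hcard
  · have : Fact p.Prime := ⟨hp⟩
    rw [GeneralLinearGroup.card_ker_map_castHom_of_coprime
      ((Nat.Prime.coprime_iff_not_dvd hp).mpr hpk_dvd), card_GL_field]
    simp [Fin.prod_univ_two, ZMod.card]

/-- Let `m ∣ M`, `p` prime with `p·k ∣ M` and `v_p(k) ≥ v_p(m)`, and let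
`H ≤ GL₂(ℤ/Mℤ)` contain the kernel of reduction modulo `m`.  Then the order of the image
of `H` modulo `pk` equals the order of its image modulo `k`, multiplied by `p⁴` when
`p ∣ k` and by `(p² − 1)(p² − p)` when `p ∤ k`. -/
theorem stmt5 (M m k p : ℕ) (hM : 0 < M) (hm : 0 < m) (hk : 0 < k)
    (hp : p.Prime) (hmM : m ∣ M) (hpkM : p * k ∣ M)
    (hval : padicValNat p m ≤ padicValNat p k)
    (H : Subgroup (GL (Fin 2) (ZMod M)))
    (hH : (Matrix.GeneralLinearGroup.map (n := Fin 2)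
            (ZMod.castHom hmM (ZMod m))).ker ≤ H) :
    Nat.card (Subgroup.map (Matrix.GeneralLinearGroup.map (n := Fin 2)
        (ZMod.castHom hpkM (ZMod (p * k)))) H)
      = Nat.card (Subgroup.map (Matrix.GeneralLinearGroup.map (n := Fin 2)
          (ZMod.castHom ((dvd_mul_left k p).trans hpkM) (ZMod k))) H) *
        (if p ∣ k then p ^ 4 else (p ^ 2 - 1) * (p ^ 2 - p)) :=
  stmt5_general M m k p hM hp hmM hpkM hval H hH
end

section
/- Let p be an odd prime and r ≥ 1 an integer. Let N be a normal subgroup of GL₂(ℤ/pʳℤ) such that every element of GL₂(ℤ/pʳℤ) is a product of an element of N and an element of SL₂(ℤ/pʳℤ) (that is, N · SL₂(ℤ/pʳℤ) = GL₂(ℤ/pʳℤ)). Then N = GL₂(ℤ/pʳℤ). -/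
/-!
Let `R` be a local ring in which `2` is a unit and which has a unit `u` that is not a square
modulo the maximal ideal; `ℤ/pʳℤ` is such a ring for odd `p`. Since `GL₂(R) = N · SL₂(R)`, the
subgroup `N` contains an element `n` with `det n = u`. Such an `n` is not scalar modulo the maximal
ideal, so it has a cyclic vector and is conjugate to a companion matrix `m = [[0, b], [1, d]] ∈ N`.
The identity `m E₁₂(s b) m⁻¹ = E₂₁(s)` shows that modulo `N` every lower transvection is an upper
one. As `SL₂` of a local ring is generated by transvections and maps onto `GL₂(R) / N`, this
quotient is the image of the abelian group of upper transvections. In an abelian quotient the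
commutator `⁅diag(2, 1), E₁₂(t)⁆ = E₁₂(t)` dies, so all transvections, hence all of `SL₂(R)`,
lie in `N`, and `N = N · SL₂(R) = GL₂(R)`.
-/

open Matrix
open scoped MatrixGroups commutatorElement

local notation "T₀₁" => SpecialLinearGroup.transvection (zero_ne_one : (0 : Fin 2) ≠ 1)
local notation "T₁₀" => SpecialLinearGroup.transvection (one_ne_zero : (1 : Fin 2) ≠ 0)

namespace Matrix

variable {R : Type*} [CommRing R]

namespace SL2

@[simp]
lemma coe_transvection_zero_one (t : R) :
    (T₀₁ t : Matrix (Fin 2) (Fin 2) R) = !![1, t; 0, 1] := by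
  ext i j; fin_cases i <;> fin_cases j <;> simp [SpecialLinearGroup.transvection_coe]

@[simp]
lemma coe_transvection_one_zero (t : R) :
    (T₁₀ t : Matrix (Fin 2) (Fin 2) R) = !![1, 0; t, 1] := by
  ext i j; fin_cases i <;> fin_cases j <;> simp [SpecialLinearGroup.transvection_coe]

lemma eq_transvection_mul_transvection_mul_transvection (A : SL(2, R)) (h : IsUnit (A 1 0)) :
    A = T₀₁ ((A 0 0 - 1) * ↑h.unit⁻¹) * T₁₀ (A 1 0) * T₀₁ ((A 1 1 - 1) * ↑h.unit⁻¹) := by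
  have hdet : A 0 0 * A 1 1 - A 0 1 * A 1 0 = 1 := by rw [← det_fin_two]; exact A.2
  have hc : A 1 0 * ↑h.unit⁻¹ = 1 := h.mul_val_inv
  ext i j
  fin_cases i <;> fin_cases j <;> simp
  · linear_combination (1 - A 0 0) * hc
  · linear_combination
      -((A 0 0 - 1) * (A 1 1 - 1) * (↑h.unit⁻¹ : R) + A 0 1) * hc - (↑h.unit⁻¹ : R) * hdet
  · linear_combination (1 - A 1 1) * hc

lemma isUnit_or_isUnit_transvection_mul_apply [IsLocalRing R] (A : SL(2, R)) :
    IsUnit (A 1 0) ∨ IsUnit ((T₁₀ 1 * A : SL(2, R)) 1 0) := by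
  refine or_iff_not_imp_left.mpr fun hc ↦ ?_
  have hdet : A 0 0 * A 1 1 + -(A 0 1 * A 1 0) = 1 := by
    rw [← sub_eq_add_neg, ← det_fin_two]; exact A.2
  have ha : IsUnit (A 0 0) := by
    rcases IsLocalRing.isUnit_or_isUnit_of_isUnit_add (hdet ▸ isUnit_one) with h | h
    · exact isUnit_of_mul_isUnit_left h
    · exact absurd (isUnit_of_mul_isUnit_right ((IsUnit.neg_iff _).mp h)) hc
  rw [show A 0 0 = (A 0 0 + A 1 0) + -A 1 0 by ring] at ha
  rcases IsLocalRing.isUnit_or_isUnit_of_isUnit_add ha with h | h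
  · simpa [mul_apply, Fin.sum_univ_two] using h
  · exact absurd ((IsUnit.neg_iff _).mp h) hc

theorem transvection_induction_of_isLocalRing [IsLocalRing R] (P : SL(2, R) → Prop)
    (h01 : ∀ t, P (T₀₁ t)) (h10 : ∀ t, P (T₁₀ t)) (hmul : ∀ A B, P A → P B → P (A * B))
    (A : SL(2, R)) : P A := by
  have hunit (A : SL(2, R)) (h : IsUnit (A 1 0)) : P A := by
    rw [eq_transvection_mul_transvection_mul_transvection A h]
    exact hmul _ _ (hmul _ _ (h01 _) (h10 _)) (h01 _)
  rcases isUnit_or_isUnit_transvection_mul_apply A with h | h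
  · exact hunit A h
  · have hA : A = T₁₀ (-1) * (T₁₀ 1 * A) := by
      rw [← mul_assoc, ← SpecialLinearGroup.transvection_add, neg_add_cancel,
        SpecialLinearGroup.transvection_coeff_zero, one_mul]
    rw [hA]
    exact hmul _ _ (h10 _) (hunit _ h)

lemma exists_map_eq_map_transvection [IsLocalRing R] {Q : Type*} [Group Q]
    (f : SL(2, R) →* Q) (b : R) (hf : ∀ s, f (T₁₀ s) = f (T₀₁ (s * b))) (A : SL(2, R)) :
    ∃ t, f A = f (T₀₁ t) :=
  transvection_induction_of_isLocalRing (fun A ↦ ∃ t, f A = f (T₀₁ t))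
    (fun t ↦ ⟨t, rfl⟩) (fun s ↦ ⟨s * b, hf s⟩)
    (fun _ _ ⟨t, ht⟩ ⟨t', ht'⟩ ↦
      ⟨t + t', by rw [map_mul, ht, ht', ← map_mul, SpecialLinearGroup.transvection_add]⟩) A

end SL2

lemma exists_isUnit_det_vec_mulVec [IsLocalRing R] (M : Matrix (Fin 2) (Fin 2) R)
    (hM : ∀ a : R, IsUnit (M.det - a ^ 2)) : ∃ v : Fin 2 → R, IsUnit (of ![v, M *ᵥ v]).det := by
  by_contra! h
  have hmem (v : Fin 2 → R) : (of ![v, M *ᵥ v]).det ∈ IsLocalRing.maximalIdeal R := h v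
  -- If none of `e₁`, `e₂`, `e₁ + e₂` is cyclic modulo the maximal ideal, `M` is scalar there.
  have key : M.det - M 0 0 ^ 2 = M 0 0 * ((of ![![1, 1], M *ᵥ ![1, 1]]).det -
      (of ![![1, 0], M *ᵥ ![1, 0]]).det - (of ![![0, 1], M *ᵥ ![0, 1]]).det) +
      (of ![![1, 0], M *ᵥ ![1, 0]]).det * (of ![![0, 1], M *ᵥ ![0, 1]]).det := by
    simp [det_fin_two]
    ring
  refine (IsLocalRing.mem_maximalIdeal _).mp ?_ (hM (M 0 0))
  rw [key]
  exact add_mem (Ideal.mul_mem_left _ _ (sub_mem (sub_mem (hmem _) (hmem _)) (hmem _)))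
    (Ideal.mul_mem_left _ _ (hmem _))

namespace GeneralLinearGroup

lemma exists_conj_eq_companion (n : GL (Fin 2) R) (v : Fin 2 → R)
    (hv : IsUnit (of ![v, (n : Matrix (Fin 2) (Fin 2) R) *ᵥ v]).det) :
    ∃ g : GL (Fin 2) R, ((g⁻¹ * n * g : GL (Fin 2) R) : Matrix (Fin 2) (Fin 2) R) =
      !![0, -(n : Matrix (Fin 2) (Fin 2) R).det; 1, (n : Matrix (Fin 2) (Fin 2) R).trace] := by
  set g := mk'' (of ![v, (n : Matrix (Fin 2) (Fin 2) R) *ᵥ v])ᵀ (by rwa [det_transpose])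
  have hg : (n * g : Matrix (Fin 2) (Fin 2) R) =
      g * !![0, -(n : Matrix (Fin 2) (Fin 2) R).det; 1, (n : Matrix (Fin 2) (Fin 2) R).trace] := by
    ext i j
    fin_cases i <;> fin_cases j <;>
      simp [g, mul_apply, Fin.sum_univ_two, det_fin_two, trace_fin_two] <;> ring
  refine ⟨g, ?_⟩
  rw [Units.val_mul, Units.val_mul, mul_assoc, hg, ← mul_assoc, ← Units.val_mul, inv_mul_cancel,
    Units.val_one, one_mul]

lemma conj_transvection_of_coe_eq {m : GL (Fin 2) R} {b d : R}
    (hm : (m : Matrix (Fin 2) (Fin 2) R) = !![0, b; 1, d]) (s : R) :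
    m * SpecialLinearGroup.toGL (T₀₁ (s * b)) * m⁻¹ = SpecialLinearGroup.toGL (T₁₀ s) := by
  rw [mul_inv_eq_iff_eq_mul]
  ext i j
  fin_cases i <;> fin_cases j <;> simp [hm]

lemma commutatorElement_diagonal_transvection {a : R} (ha : IsUnit a) (t : R) :
    ⁅mk'' (diagonal ![a, 1]) (by simpa using ha), SpecialLinearGroup.toGL (T₀₁ t)⁆ =
      SpecialLinearGroup.toGL (T₀₁ ((a - 1) * t)) := by
  rw [commutatorElement_def, mul_inv_eq_iff_eq_mul, mul_inv_eq_iff_eq_mul]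
  ext i j
  fin_cases i <;> fin_cases j <;> simp
  ring

lemma map_toGL_transvection_eq_one_of_commute {Q : Type*} [Group Q] (f : GL (Fin 2) R →* Q)
    (hf : ∀ x y, Commute (f x) (f y)) (h2 : IsUnit (2 : R)) (t : R) :
    f (SpecialLinearGroup.toGL (T₀₁ t)) = 1 := by
  rw [show t = (2 - 1) * t by ring, ← commutatorElement_diagonal_transvection h2,
    map_commutatorElement, commutatorElement_eq_one_iff_commute]
  exact hf _ _

variable {N : Subgroup (GL (Fin 2) R)} [N.Normal]

lemma exists_mem_coe_eq_companion [IsLocalRing R] {u : R} (hu : ∀ a, IsUnit (u - a ^ 2))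
    (hN : ∀ g : GL (Fin 2) R, ∃ n ∈ N, ∃ s : SL(2, R), g = n * SpecialLinearGroup.toGL s) :
    ∃ m ∈ N, ∃ b d : R, (m : Matrix (Fin 2) (Fin 2) R) = !![0, b; 1, d] := by
  obtain ⟨n, hn, s, hs⟩ := hN (mk'' (diagonal ![u, 1]) (by simpa using hu 0))
  have hdet : (n : Matrix (Fin 2) (Fin 2) R).det = u := by
    simpa [Units.val_mul, det_mul] using
      congrArg (fun g : GL (Fin 2) R ↦ (g : Matrix (Fin 2) (Fin 2) R).det) hs.symm
  obtain ⟨v, hv⟩ := exists_isUnit_det_vec_mulVec _ (hdet ▸ hu)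
  obtain ⟨g, hg⟩ := exists_conj_eq_companion n v hv
  have hconj : g⁻¹ * n * g ∈ N := by simpa using ‹N.Normal›.conj_mem n hn g⁻¹
  exact ⟨_, hconj, _, _, hg⟩

lemma mk_transvection_eq_of_mem {m : GL (Fin 2) R} (hmN : m ∈ N) {b d : R}
    (hm : (m : Matrix (Fin 2) (Fin 2) R) = !![0, b; 1, d]) (s : R) :
    QuotientGroup.mk' N (SpecialLinearGroup.toGL (T₁₀ s)) =
      QuotientGroup.mk' N (SpecialLinearGroup.toGL (T₀₁ (s * b))) := by
  have hm1 : QuotientGroup.mk' N m = 1 := (QuotientGroup.eq_one_iff m).mpr hmN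
  rw [← conj_transvection_of_coe_eq hm s, map_mul, map_mul, map_inv, hm1, one_mul, inv_one,
    mul_one]

lemma commute_mk'_of_mem [IsLocalRing R]
    (hN : ∀ g : GL (Fin 2) R, ∃ n ∈ N, ∃ s : SL(2, R), g = n * SpecialLinearGroup.toGL s)
    {m : GL (Fin 2) R} (hmN : m ∈ N) {b d : R}
    (hm : (m : Matrix (Fin 2) (Fin 2) R) = !![0, b; 1, d]) (x y : GL (Fin 2) R) :
    Commute (QuotientGroup.mk' N x) (QuotientGroup.mk' N y) := by
  set ψ := (QuotientGroup.mk' N).comp SpecialLinearGroup.toGL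
  have hψ (x : GL (Fin 2) R) : ∃ t, QuotientGroup.mk' N x = ψ (T₀₁ t) := by
    obtain ⟨n, hn, s, rfl⟩ := hN x
    have hn1 : QuotientGroup.mk' N n = 1 := (QuotientGroup.eq_one_iff n).mpr hn
    obtain ⟨t, ht⟩ := SL2.exists_map_eq_map_transvection ψ b (mk_transvection_eq_of_mem hmN hm) s
    exact ⟨t, by rw [map_mul, hn1, one_mul, ← ht]; rfl⟩
  obtain ⟨t, ht⟩ := hψ x
  obtain ⟨t', ht'⟩ := hψ y
  rw [ht, ht', Commute, SemiconjBy, ← map_mul, ← map_mul, ← SpecialLinearGroup.transvection_add,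
    add_comm, SpecialLinearGroup.transvection_add]

theorem eq_top_of_forall_eq_mul_toGL [IsLocalRing R] (h2 : IsUnit (2 : R)) {u : R}
    (hu : ∀ a, IsUnit (u - a ^ 2))
    (hN : ∀ g : GL (Fin 2) R, ∃ n ∈ N, ∃ s : SL(2, R), g = n * SpecialLinearGroup.toGL s) :
    N = ⊤ := by
  obtain ⟨m, hmN, b, d, hm⟩ := exists_mem_coe_eq_companion hu hN
  set ψ := (QuotientGroup.mk' N).comp SpecialLinearGroup.toGL
  have h01 (t : R) : ψ (T₀₁ t) = 1 :=
    map_toGL_transvection_eq_one_of_commute _ (commute_mk'_of_mem hN hmN hm) h2 t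
  have h10 (t : R) : ψ (T₁₀ t) = 1 := (mk_transvection_eq_of_mem hmN hm t).trans (h01 _)
  have hSL (A : SL(2, R)) : ψ A = 1 :=
    SL2.transvection_induction_of_isLocalRing (fun A ↦ ψ A = 1) h01 h10
      (fun _ _ hA hB ↦ by rw [map_mul, hA, hB, one_mul]) A
  rw [Subgroup.eq_top_iff']
  intro x
  obtain ⟨n, hn, s, rfl⟩ := hN x
  exact mul_mem hn ((QuotientGroup.eq_one_iff _).mp (hSL s))

end GeneralLinearGroup

end Matrix

namespace ZMod

variable {p r : ℕ}

lemma isUnit_iff_castHom_ne_zero (hp : p.Prime) (hr : r ≠ 0) (x : ZMod (p ^ r)) :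
    IsUnit x ↔ castHom (dvd_pow_self p hr) (ZMod p) x ≠ 0 := by
  have : NeZero (p ^ r) := ⟨pow_ne_zero r hp.ne_zero⟩
  rw [← natCast_zmod_val x, isUnit_natCast_iff_not_dvd_pow hp (Nat.pos_of_ne_zero hr),
    map_natCast, Ne, natCast_eq_zero_iff]

lemma isLocalRing_prime_pow (hp : p.Prime) (hr : r ≠ 0) : IsLocalRing (ZMod (p ^ r)) :=
  have : Nontrivial (ZMod (p ^ r)) :=
    nontrivial_iff.mpr (Nat.pow_eq_one.not.mpr (by simp [hp.ne_one, hr]))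
  IsLocalRing.of_isUnit_or_isUnit_of_isUnit_add fun a b hab ↦ by
    simp only [isUnit_iff_castHom_ne_zero hp hr, map_add] at hab ⊢
    contrapose! hab
    rw [hab.1, hab.2, add_zero]

lemma ringChar_ne_two_of_odd (hodd : Odd p) : ringChar (ZMod p) ≠ 2 := by
  rw [ringChar_zmod_n]
  rintro rfl
  exact Nat.not_odd_iff_even.mpr even_two hodd

lemma isUnit_two_of_odd (hp : p.Prime) (hodd : Odd p) (hr : r ≠ 0) :
    IsUnit (2 : ZMod (p ^ r)) := by
  have : Fact p.Prime := ⟨hp⟩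
  rw [isUnit_iff_castHom_ne_zero hp hr, map_ofNat]
  exact Ring.two_ne_zero (ringChar_ne_two_of_odd hodd)

lemma exists_forall_isUnit_sub_sq (hp : p.Prime) (hodd : Odd p) (hr : r ≠ 0) :
    ∃ u : ZMod (p ^ r), ∀ a, IsUnit (u - a ^ 2) := by
  have : Fact p.Prime := ⟨hp⟩
  set φ := castHom (dvd_pow_self p hr) (ZMod p)
  obtain ⟨w, hw⟩ := FiniteField.exists_nonsquare (ringChar_ne_two_of_odd hodd)
  obtain ⟨u, rfl⟩ := ringHom_surjective φ w
  refine ⟨u, fun a ↦ (isUnit_iff_castHom_ne_zero hp hr _).mpr fun h ↦ hw ⟨φ a, ?_⟩⟩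
  rw [map_sub, map_pow, sub_eq_zero] at h
  rw [h, sq]

end ZMod

/-- For `p` an odd prime and `r ≥ 1`, any normal subgroup `N` of
`GL₂(ℤ/pʳℤ)` with `N · SL₂(ℤ/pʳℤ) = GL₂(ℤ/pʳℤ)` is all of `GL₂(ℤ/pʳℤ)`. -/
theorem stmt6 (p : ℕ) (hp : p.Prime) (hodd : Odd p) (r : ℕ) (hr : 1 ≤ r)
    (N : Subgroup (GL (Fin 2) (ZMod (p ^ r)))) (hN : N.Normal)
    (hprod : ∀ g : GL (Fin 2) (ZMod (p ^ r)), ∃ n ∈ N,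
      ∃ s : Matrix.SpecialLinearGroup (Fin 2) (ZMod (p ^ r)),
        g = n * Matrix.SpecialLinearGroup.toGL s) :
    N = ⊤ := by
  have hr0 : r ≠ 0 := by omega
  have := ZMod.isLocalRing_prime_pow hp hr0
  obtain ⟨u, hu⟩ := ZMod.exists_forall_isUnit_sub_sq hp hodd hr0
  exact GeneralLinearGroup.eq_top_of_forall_eq_mul_toGL (ZMod.isUnit_two_of_odd hp hodd hr0) hu
    hprod
end

section
/- Let R be an odd squarefree positive integer, let S be a divisor of R with S > 1, and let d ≥ 2 be an integer. For each divisor k of R, set N_k = φ(k), and set N′_k = φ(k) if S ∣ k and N′_k = d·φ(k) if S ∤ k. Then, as rational numbers, ∑_{k ∣ R} μ(k)·(1/N_k − 1/N′_k) = (1/φ(S))·(1 − 1/d)·(∏_{q prime, q ∣ R/S} (1 − 1/φ(q)))·((∏_{q prime, q ∣ S} (φ(q) − 1)) − μ(S)). -/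
/-!
Off the multiples of `S` the summand is `(1 - 1/d) μ(k)/φ(k)`, and on them it vanishes. Over
all divisors of the squarefree `R`, `∑ μ(k)/φ(k)` is the Euler product
`∏_{q ∣ R} (1 - 1/φ(q))`; the multiples of `S` are the `S j` with `j ∣ R/S` coprime to `S`,
so by multiplicativity they contribute `μ(S)/φ(S) · ∏_{q ∣ R/S} (1 - 1/φ(q))`. It remains to
use `φ(S) = ∏_{q ∣ S} φ(q)`.
-/

open ArithmeticFunction
open Finset
open scoped Nat ArithmeticFunction.Moebius

noncomputable def invTotient (K : Type*) [Field K] : ArithmeticFunction K :=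
  ⟨fun n => (φ n : K)⁻¹, by simp⟩

section

variable {K : Type*} [Field K]

@[simp]
lemma invTotient_apply (n : ℕ) : invTotient K n = (φ n : K)⁻¹ := rfl

lemma isMultiplicative_invTotient : (invTotient K).IsMultiplicative :=
  ⟨by simp, fun h => by simp [Nat.totient_mul h, mul_comm]⟩

lemma sum_divisors_moebius_div_totient {n : ℕ} (hn : Squarefree n) :
    ∑ k ∈ n.divisors, (μ k : K) / φ k = ∏ p ∈ n.primeFactors, (1 - (φ p : K)⁻¹) := by
  have h := isMultiplicative_invTotient.prodPrimeFactors_one_sub_of_squarefree (R := K) _ hn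
  simp only [invTotient_apply] at h
  simp only [h, div_eq_mul_inv]

lemma prod_primeFactors_one_sub_inv_totient [CharZero K] {n : ℕ} (hn : Squarefree n) :
    ∏ p ∈ n.primeFactors, (1 - (φ p : K)⁻¹) =
      (∏ p ∈ n.primeFactors, ((φ p : K) - 1)) / φ n := by
  have hφ : ∏ p ∈ n.primeFactors, (φ p : K)⁻¹ = (φ n : K)⁻¹ := by
    simpa using (isMultiplicative_invTotient (K := K)).prod_primeFactors hn
  rw [div_eq_mul_inv, ← hφ, ← prod_mul_distrib]
  refine prod_congr rfl fun p hp => ?_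
  have : (φ p : K) ≠ 0 := by
    exact_mod_cast (Nat.totient_pos.mpr (Nat.prime_of_mem_primeFactors hp).pos).ne'
  field_simp

end

lemma ArithmeticFunction.IsMultiplicative.sum_divisors_filter_dvd {R : Type*} [CommSemiring R]
    {f : ArithmeticFunction R} (hf : f.IsMultiplicative) {m n : ℕ} (hmn : m.Coprime n) :
    ∑ k ∈ (m * n).divisors with m ∣ k, f k = f m * ∑ k ∈ n.divisors, f k := by
  rcases eq_or_ne m 0 with rfl | hm
  · simp [(Nat.coprime_zero_left n).mp hmn]
  have hdivisors : {k ∈ (m * n).divisors | m ∣ k} =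
      n.divisors.map ⟨(m * ·), mul_right_injective₀ hm⟩ := by
    ext k
    simp only [mem_filter, Nat.mem_divisors, mem_map, Function.Embedding.coeFn_mk]
    constructor
    · rintro ⟨⟨hk, hmn0⟩, j, rfl⟩
      exact ⟨j, ⟨(mul_dvd_mul_iff_left hm).mp hk, right_ne_zero_of_mul hmn0⟩, rfl⟩
    · rintro ⟨j, ⟨hj, hn⟩, rfl⟩
      exact ⟨⟨mul_dvd_mul_left m hj, mul_ne_zero hm hn⟩, dvd_mul_right m j⟩
  rw [hdivisors, sum_map, mul_sum]
  exact sum_congr rfl fun k hk =>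
    hf.map_mul_of_coprime (hmn.coprime_dvd_right (Nat.dvd_of_mem_divisors hk))

theorem stmt9_general (R S d : ℕ) (hR0 : 0 < R) (hRsq : Squarefree R)
    (hSR : S ∣ R) :
    ∑ k ∈ R.divisors, (moebius k : ℚ) *
        (1 / (Nat.totient k : ℚ) -
          1 / (if S ∣ k then (Nat.totient k : ℚ) else (d : ℚ) * (Nat.totient k : ℚ))) =
      (1 / (Nat.totient S : ℚ)) * (1 - 1 / (d : ℚ)) *
        (∏ q ∈ (R / S).primeFactors, (1 - 1 / (Nat.totient q : ℚ))) *
        ((∏ q ∈ S.primeFactors, ((Nat.totient q : ℚ) - 1)) - (moebius S : ℚ)) := by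
  obtain ⟨m, rfl⟩ := hSR
  have hS : S ≠ 0 := left_ne_zero_of_mul hR0.ne'
  obtain ⟨hSm, hSsq, hmsq⟩ := Nat.squarefree_mul_iff.mp hRsq
  have hsummand : ∀ k,
      (μ k : ℚ) * (1 / φ k - 1 / (if S ∣ k then (φ k : ℚ) else (d : ℚ) * φ k)) =
      (1 - 1 / d) * ((μ k : ℚ) / φ k - if S ∣ k then (μ k : ℚ) / φ k else 0) := by
    intro k
    split_ifs
    · ring
    · rw [← one_div_mul_one_div]
      ring
  have hfiltered := (isMultiplicative_moebius.intCast.pmul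
    (isMultiplicative_invTotient (K := ℚ))).sum_divisors_filter_dvd hSm
  simp only [pmul_apply, intCoe_apply, invTotient_apply, ← div_eq_mul_inv] at hfiltered
  simp_rw [hsummand, ← mul_sum, sum_sub_distrib, ← sum_filter, hfiltered,
    sum_divisors_moebius_div_totient hRsq, sum_divisors_moebius_div_totient hmsq,
    Nat.mul_div_cancel_left m (pos_of_ne_zero hS), hSm.primeFactors_mul,
    prod_union hSm.disjoint_primeFactors, prod_primeFactors_one_sub_inv_totient hSsq, one_div]
  ring

/-- For `R` odd squarefree, `S ∣ R` with `S > 1`, and `d ≥ 2`, setting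
`N_k = φ(k)` and `N′_k = φ(k)` if `S ∣ k`, `N′_k = d·φ(k)` otherwise, one has the
closed-form evaluation of `∑_{k ∣ R} μ(k)(1/N_k − 1/N′_k)`. -/
theorem stmt9 (R S d : ℕ) (hR0 : 0 < R) (hRodd : Odd R) (hRsq : Squarefree R)
    (hSR : S ∣ R) (hS1 : 1 < S) (hd : 2 ≤ d) :
    ∑ k ∈ R.divisors, (moebius k : ℚ) *
        (1 / (Nat.totient k : ℚ) -
          1 / (if S ∣ k then (Nat.totient k : ℚ) else (d : ℚ) * (Nat.totient k : ℚ))) =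
      (1 / (Nat.totient S : ℚ)) * (1 - 1 / (d : ℚ)) *
        (∏ q ∈ (R / S).primeFactors, (1 - 1 / (Nat.totient q : ℚ))) *
        ((∏ q ∈ S.primeFactors, ((Nat.totient q : ℚ) - 1)) - (moebius S : ℚ)) :=
  stmt9_general R S d hR0 hRsq hSR
end

section
/- Let R be an odd squarefree positive integer, let S be a divisor of R with S > 1, and let d ≥ 2 be an integer. For each divisor k of R, set N_k = φ(k), and set N′_k = φ(k) if S ∣ k and N′_k = d·φ(k) if S ∤ k. Then ∑_{k ∣ R} μ(k)·(1/N_k − 1/N′_k) > 0. -/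
/-! Each summand equals `(1 - 1/d) g(k)` for `S ∤ k` and vanishes for `S ∣ k`, where `g = μ/φ` is
multiplicative. Writing `R = S T` with `S, T` coprime, the sum is therefore
`(1 - 1/d) (∑_{a ∣ S} g a - g S) ∑_{b ∣ T} g b`. For squarefree `n` one has
`∑_{a ∣ n} g a = ∏_{p ∣ n} (p - 2)/(p - 1)`, positive since all `p` are odd, and
`g n = ∏_{p ∣ n} -1/(p - 1)`, so the middle factor is `(∏_{p ∣ S} (p - 2) - (-1)^ω(S)) / φ(S)`.
Its numerator is positive: with one prime factor it is `p - 1`, and with two or more, one of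
them exceeds `3`, so the product exceeds `1`. -/

open ArithmeticFunction Finset
open scoped Nat ArithmeticFunction.Moebius

noncomputable def moebiusDivTotient : ArithmeticFunction ℚ :=
  ⟨fun k => μ k / φ k, by simp⟩

theorem moebiusDivTotient_apply (k : ℕ) : moebiusDivTotient k = μ k / φ k := rfl

theorem isMultiplicative_moebiusDivTotient : moebiusDivTotient.IsMultiplicative := by
  refine ⟨by simp [moebiusDivTotient_apply], fun {m n} hmn => ?_⟩
  simp only [moebiusDivTotient_apply, isMultiplicative_moebius.map_mul_of_coprime hmn,
    Nat.totient_mul hmn]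
  push_cast
  exact mul_div_mul_comm _ _ _ _

theorem moebiusDivTotient_prime {p : ℕ} (hp : p.Prime) :
    moebiusDivTotient p = -1 / ((p : ℚ) - 1) := by
  rw [moebiusDivTotient_apply, moebius_apply_prime hp, Nat.totient_prime hp,
    Nat.cast_sub hp.one_le]
  simp

theorem one_add_moebiusDivTotient_prime {p : ℕ} (hp : p.Prime) :
    1 + moebiusDivTotient p = ((p : ℚ) - 2) / ((p : ℚ) - 1) := by
  have : (p : ℚ) - 1 ≠ 0 := sub_ne_zero.2 (by exact_mod_cast hp.one_lt.ne')
  rw [moebiusDivTotient_prime hp]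
  field_simp
  ring

theorem moebius_mul_one_div_totient_sub (P : Prop) [Decidable P] (d k : ℕ) :
    (μ k : ℚ) * (1 / φ k - 1 / (if P then (φ k : ℚ) else d * φ k)) =
      (1 - 1 / d) * if P then 0 else moebiusDivTotient k := by
  split_ifs
  · simp
  · simp only [moebiusDivTotient_apply, one_div, mul_inv]
    ring

theorem Nat.three_le_of_mem_primeFactors_of_odd {n p : ℕ} (hn : Odd n)
    (hp : p ∈ n.primeFactors) : 3 ≤ p := by
  have h2 := hn.ne_two_of_dvd_nat (Nat.dvd_of_mem_primeFactors hp)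
  have := (Nat.prime_of_mem_primeFactors hp).two_le
  omega

namespace ArithmeticFunction.IsMultiplicative

section CommSemiring

variable {R : Type*} [CommSemiring R] {f : ArithmeticFunction R}

theorem sum_divisors_mul (hf : f.IsMultiplicative) {m n : ℕ} (hmn : m.Coprime n) :
    ∑ k ∈ (m * n).divisors, f k = (∑ a ∈ m.divisors, f a) * ∑ b ∈ n.divisors, f b := by
  simp only [← coe_mul_zeta_apply, (hf.mul isMultiplicative_zeta.natCast).map_mul_of_coprime hmn]

theorem sum_divisors_mul_filter_dvd (hf : f.IsMultiplicative) {m n : ℕ} (hmn : m.Coprime n) :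
    ∑ k ∈ (m * n).divisors with m ∣ k, f k = f m * ∑ b ∈ n.divisors, f b := by
  rcases eq_or_ne m 0 with rfl | hm
  · simp [(Nat.coprime_zero_left n).mp hmn]
  rw [mul_sum]
  refine (sum_nbij' (m * ·) (· / m) ?_ ?_ ?_ ?_ ?_).symm
  · intro b hb
    simp only [mem_filter, Nat.mem_divisors] at hb ⊢
    exact ⟨⟨mul_dvd_mul_left m hb.1, mul_ne_zero hm hb.2⟩, dvd_mul_right m b⟩
  · intro k hk
    simp only [mem_filter, Nat.mem_divisors] at hk ⊢
    obtain ⟨⟨hkmn, hmn0⟩, b, rfl⟩ := hk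
    rw [Nat.mul_div_cancel_left b (Nat.pos_of_ne_zero hm)]
    exact ⟨Nat.dvd_of_mul_dvd_mul_left (Nat.pos_of_ne_zero hm) hkmn, right_ne_zero_of_mul hmn0⟩
  · intro b _
    exact Nat.mul_div_cancel_left b (Nat.pos_of_ne_zero hm)
  · intro k hk
    exact Nat.mul_div_cancel' (mem_filter.mp hk).2
  · intro b hb
    exact (hf.map_mul_of_coprime (hmn.coprime_dvd_right (Nat.dvd_of_mem_divisors hb))).symm

end CommSemiring

theorem sum_divisors_mul_ite_dvd {R : Type*} [CommRing R] {f : ArithmeticFunction R}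
    (hf : f.IsMultiplicative) {m n : ℕ} (hmn : m.Coprime n) :
    ∑ k ∈ (m * n).divisors, (if m ∣ k then 0 else f k) =
      (∑ a ∈ m.divisors, f a - f m) * ∑ b ∈ n.divisors, f b := by
  rw [sub_mul, ← hf.sum_divisors_mul hmn, ← hf.sum_divisors_mul_filter_dvd hmn, eq_sub_iff_add_eq,
    sum_filter, ← sum_add_distrib]
  exact sum_congr rfl fun k _ => by split_ifs <;> simp

end ArithmeticFunction.IsMultiplicative

theorem neg_one_pow_card_lt_prod_sub_two {s : Finset ℕ} (hs : s.Nonempty)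
    (h3 : ∀ p ∈ s, 3 ≤ p) : (-1 : ℚ) ^ #s < ∏ p ∈ s, ((p : ℚ) - 2) := by
  have one_le : ∀ p ∈ s, (1 : ℚ) ≤ p - 2 := fun p hp => by
    have : (3 : ℚ) ≤ p := by exact_mod_cast h3 p hp
    linarith
  rcases (one_le_card.mpr hs).eq_or_lt with hcard | hcard
  · obtain ⟨a, rfl⟩ := card_eq_one.mp hcard.symm
    have := one_le a (mem_singleton_self a)
    simp only [card_singleton, pow_one, prod_singleton]
    linarith
  obtain ⟨c, hc, hc4⟩ : ∃ c ∈ s, 4 ≤ c := by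
    obtain ⟨a, ha, b, hb, hab⟩ := one_lt_card.mp hcard
    have := h3 a ha
    have := h3 b hb
    rcases le_or_gt 4 a with h | h
    · exact ⟨a, ha, h⟩
    · exact ⟨b, hb, by omega⟩
  have hc4' : (4 : ℚ) ≤ c := by exact_mod_cast hc4
  calc (-1 : ℚ) ^ #s ≤ 1 := (le_abs_self _).trans_eq (by simp)
    _ < (c : ℚ) - 2 := by linarith
    _ = ∏ p ∈ {c}, ((p : ℚ) - 2) := (prod_singleton (fun p : ℕ => (p : ℚ) - 2) c).symm
    _ ≤ ∏ p ∈ s, ((p : ℚ) - 2) :=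
      prod_le_prod_of_subset_of_one_le (singleton_subset_iff.2 hc)
        (by simp only [mem_singleton, forall_eq]; linarith) fun p hp _ => one_le p hp

theorem sum_divisors_moebiusDivTotient_pos {n : ℕ} (hn : Squarefree n) (hodd : Odd n) :
    0 < ∑ k ∈ n.divisors, moebiusDivTotient k := by
  rw [← isMultiplicative_moebiusDivTotient.prodPrimeFactors_one_add_of_squarefree hn]
  refine prod_pos fun p hp => ?_
  have hp3 : (3 : ℚ) ≤ p := by exact_mod_cast Nat.three_le_of_mem_primeFactors_of_odd hodd hp
  rw [one_add_moebiusDivTotient_prime (Nat.prime_of_mem_primeFactors hp)]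
  exact div_pos (by linarith) (by linarith)

theorem sum_divisors_moebiusDivTotient_sub_pos {n : ℕ} (hn : Squarefree n) (hodd : Odd n)
    (h1 : 1 < n) : 0 < ∑ k ∈ n.divisors, moebiusDivTotient k - moebiusDivTotient n := by
  have hprime : ∀ p ∈ n.primeFactors, p.Prime := fun p hp => Nat.prime_of_mem_primeFactors hp
  rw [← isMultiplicative_moebiusDivTotient.prodPrimeFactors_one_add_of_squarefree hn,
    ← isMultiplicative_moebiusDivTotient.prod_primeFactors hn,
    prod_congr rfl fun p hp => one_add_moebiusDivTotient_prime (hprime p hp),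
    prod_congr rfl fun p hp => moebiusDivTotient_prime (hprime p hp),
    prod_div_distrib, prod_div_distrib, prod_const, ← sub_div]
  refine div_pos (sub_pos.2 (neg_one_pow_card_lt_prod_sub_two (Nat.nonempty_primeFactors.2 h1)
    fun p hp => Nat.three_le_of_mem_primeFactors_of_odd hodd hp)) (prod_pos fun p hp => ?_)
  have hp3 : (3 : ℚ) ≤ p := by exact_mod_cast Nat.three_le_of_mem_primeFactors_of_odd hodd hp
  linarith

theorem stmt10_general (R S d : ℕ) (hRodd : Odd R) (hRsq : Squarefree R)
    (hSR : S ∣ R) (hS1 : 1 < S) (hd : 2 ≤ d) :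
    0 < ∑ k ∈ R.divisors, (moebius k : ℚ) *
        (1 / (Nat.totient k : ℚ) -
          1 / (if S ∣ k then (Nat.totient k : ℚ) else (d : ℚ) * (Nat.totient k : ℚ))) := by
  obtain ⟨T, rfl⟩ := hSR
  obtain ⟨hST, hS, hT⟩ := Nat.squarefree_mul_iff.mp hRsq
  obtain ⟨hSodd, hTodd⟩ := Nat.odd_mul.mp hRodd
  have hd' : (1 : ℚ) / d < 1 := by
    rw [div_lt_one (by positivity)]
    exact_mod_cast hd
  simp only [moebius_mul_one_div_totient_sub]
  rw [← mul_sum, isMultiplicative_moebiusDivTotient.sum_divisors_mul_ite_dvd hST]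
  exact mul_pos (sub_pos.2 hd') (mul_pos (sum_divisors_moebiusDivTotient_sub_pos hS hSodd hS1)
    (sum_divisors_moebiusDivTotient_pos hT hTodd))

/-- For `R` odd squarefree, `S ∣ R` with `S > 1`, and `d ≥ 2`, setting
`N_k = φ(k)` and `N′_k = φ(k)` if `S ∣ k`, `N′_k = d·φ(k)` otherwise, the sum
`∑_{k ∣ R} μ(k)(1/N_k − 1/N′_k)` is strictly positive. -/
theorem stmt10 (R S d : ℕ) (hR0 : 0 < R) (hRodd : Odd R) (hRsq : Squarefree R)
    (hSR : S ∣ R) (hS1 : 1 < S) (hd : 2 ≤ d) :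
    0 < ∑ k ∈ R.divisors, (moebius k : ℚ) *
        (1 / (Nat.totient k : ℚ) -
          1 / (if S ∣ k then (Nat.totient k : ℚ) else (d : ℚ) * (Nat.totient k : ℚ))) :=
  stmt10_general R S d hRodd hRsq hSR hS1 hd
end

section
/- Let R be a squarefree positive integer and let S be a divisor of R. Then, as rational numbers, ∑_{k ∣ R, S ∣ k} μ(k)/φ(k) = (μ(S)/φ(S)) · ∏_{q prime, q ∣ R/S} (1 − 1/φ(q)). -/
/-!
Write `R = S * T`; squarefreeness makes `S` and `T` coprime, so the divisors of `R` divisible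
by `S` are the `S * d` with `d ∣ T`, and multiplicativity of `μ / φ` pulls out `μ(S) / φ(S)`.
What remains, `∑_{d ∣ T} μ(d) / φ(d)`, is the Euler product `∏_{q ∣ T} (1 - 1 / φ(q))`
because `T` is squarefree.
-/

open ArithmeticFunction

namespace ArithmeticFunction

def totientInv (K : Type*) [DivisionSemiring K] : ArithmeticFunction K :=
  ⟨fun n => (Nat.totient n : K)⁻¹, by simp⟩

@[simp]
theorem totientInv_apply {K : Type*} [DivisionSemiring K] (n : ℕ) :
    totientInv K n = (Nat.totient n : K)⁻¹ :=
  rfl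

theorem isMultiplicative_totientInv (K : Type*) [Semifield K] :
    (totientInv K).IsMultiplicative :=
  ⟨by simp, fun h => by simp [Nat.totient_mul h, mul_comm]⟩

theorem IsMultiplicative.sum_filter_dvd_divisors_mul {R : Type*} [CommSemiring R]
    {f : ArithmeticFunction R} (hf : f.IsMultiplicative) {S T : ℕ} (hST : S.Coprime T) :
    ∑ k ∈ (S * T).divisors.filter (S ∣ ·), f k = f S * ∑ d ∈ T.divisors, f d := by
  rcases Nat.eq_zero_or_pos S with rfl | hS
  · simp
  rw [Finset.mul_sum]
  refine Finset.sum_nbij' (· / S) (S * ·) ?_ ?_ ?_ ?_ ?_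
  · intro k hk
    simp only [Finset.mem_filter, Nat.mem_divisors] at hk ⊢
    obtain ⟨⟨hk, hST0⟩, c, rfl⟩ := hk
    rw [Nat.mul_div_cancel_left c hS]
    exact ⟨(Nat.mul_dvd_mul_iff_left hS).mp hk, right_ne_zero_of_mul hST0⟩
  · intro d hd
    simp only [Finset.mem_filter, Nat.mem_divisors] at hd ⊢
    exact ⟨⟨Nat.mul_dvd_mul_left S hd.1, mul_ne_zero hS.ne' hd.2⟩, dvd_mul_right S d⟩
  · intro k hk
    exact Nat.mul_div_cancel' (Finset.mem_filter.mp hk).2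
  · rintro d -
    exact Nat.mul_div_cancel_left d hS
  · intro k hk
    obtain ⟨hk, c, rfl⟩ := Finset.mem_filter.mp hk
    have hcT : c ∣ T := (Nat.mul_dvd_mul_iff_left hS).mp (Nat.dvd_of_mem_divisors hk)
    rw [Nat.mul_div_cancel_left c hS, hf.map_mul_of_coprime (hST.coprime_dvd_right hcT)]

end ArithmeticFunction

theorem stmt12_general (R S : ℕ) (hRsq : Squarefree R) (hSR : S ∣ R) :
    ∑ k ∈ R.divisors.filter (S ∣ ·), (moebius k : ℚ) / (Nat.totient k : ℚ) =
      ((moebius S : ℚ) / (Nat.totient S : ℚ)) *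
        ∏ q ∈ (R / S).primeFactors, (1 - 1 / (Nat.totient q : ℚ)) := by
  obtain ⟨T, rfl⟩ := hSR
  obtain ⟨hST, -, hT⟩ := Nat.squarefree_mul_iff.mp hRsq
  have hS : S ≠ 0 := left_ne_zero_of_mul hRsq.ne_zero
  have hsplit := (isMultiplicative_moebius.intCast.pmul
    (isMultiplicative_totientInv ℚ)).sum_filter_dvd_divisors_mul hST
  simp only [pmul_apply, intCoe_apply, totientInv_apply, ← div_eq_mul_inv] at hsplit
  have heuler := (isMultiplicative_totientInv ℚ).prodPrimeFactors_one_sub_of_squarefree _ hT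
  simp only [totientInv_apply, ← one_div, mul_one_div] at heuler
  rw [Nat.mul_div_cancel_left T (Nat.pos_of_ne_zero hS), hsplit, heuler]

/-- For `R` squarefree and `S ∣ R`,
`∑_{k ∣ R, S ∣ k} μ(k)/φ(k) = (μ(S)/φ(S)) · ∏_{q prime, q ∣ R/S} (1 − 1/φ(q))`. -/
theorem stmt12 (R S : ℕ) (hR0 : 0 < R) (hRsq : Squarefree R) (hSR : S ∣ R) :
    ∑ k ∈ R.divisors.filter (S ∣ ·), (moebius k : ℚ) / (Nat.totient k : ℚ) =
      ((moebius S : ℚ) / (Nat.totient S : ℚ)) *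
        ∏ q ∈ (R / S).primeFactors, (1 - 1 / (Nat.totient q : ℚ)) :=
  stmt12_general R S hRsq hSR
end
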